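/- arXiv:2006.03457 — 6 statements merged into one kernel-verified Lean document; each statement's English description precedes it below -/
import Mathlib

section
/- Let n ≥ 2 and let t₁, t₂ be integers with gcd(t₁, n) = 1 and gcd(t₂, n) = 1. Then for every i ∈ {1, 2}, letting j be the other index, and for every positive integer a ≤ n with a·tᵢ ≡ 0 (mod n), there exists an integer b with 0 < b ≤ a + 1 and b·tᵢ ≡ −tⱼ (mod n). (This is the numerical criterion showing that every two-dimensional cyclic quotient singularity 1/n(t₁,t₂) is nearly Gorenstein.) -/
/-- Two-dimensional cyclic quotient singularities `1/n(t₁,t₂)` satisfy the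
numerical nearly-Gorenstein criterion. -/
theorem stmt_0 (n : ℤ) (hn : 2 ≤ n) (t₁ t₂ : ℤ)
    (h1 : Int.gcd t₁ n = 1) (h2 : Int.gcd t₂ n = 1) :
    ∀ t t' : ℤ, ((t, t') = (t₁, t₂) ∨ (t, t') = (t₂, t₁)) →
      ∀ a : ℤ, 0 < a → a ≤ n → a * t ≡ 0 [ZMOD n] →
        ∃ b : ℤ, 0 < b ∧ b ≤ a + 1 ∧ b * t ≡ -t' [ZMOD n] := by
  intro t t' htt a ha han hat
  have hnpos : (0:ℤ) < n := by linarith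
  -- t is coprime to n
  have hcop : IsCoprime t n := by
    rcases htt with h | h <;> (injection h with h' h''; subst h'; subst h'')
    · exact Int.isCoprime_iff_gcd_eq_one.mpr h1
    · exact Int.isCoprime_iff_gcd_eq_one.mpr h2
  -- from a*t ≡ 0, n ∣ a, so a = n
  have hdvd : n ∣ a * t := (Int.modEq_zero_iff_dvd).mp hat
  have hna : n ∣ a := (IsCoprime.symm hcop).dvd_of_dvd_mul_right hdvd
  have haeq : a = n := le_antisymm han (Int.le_of_dvd ha hna)
  subst haeq
  -- inverse of t mod n
  obtain ⟨u, v, huv⟩ := hcop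
  -- candidate b₀ = -t' * u
  set b₀ : ℤ := -t' * u with hb0
  set b : ℤ := (b₀ - 1) % a + 1 with hb
  refine ⟨b, ?_, ?_, ?_⟩
  · have := Int.emod_nonneg (b₀ - 1) (ne_of_gt hnpos)
    linarith
  · have := Int.emod_lt_of_pos (b₀ - 1) hnpos
    linarith
  · have hbb : b ≡ b₀ [ZMOD a] := by
      have : (b₀ - 1) % a ≡ b₀ - 1 [ZMOD a] := Int.emod_emod_of_dvd _ dvd_rfl
      calc b = (b₀ - 1) % a + 1 := rfl
        _ ≡ (b₀ - 1) + 1 [ZMOD a] := Int.ModEq.add_right 1 this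
        _ = b₀ := by ring
    have hut : u * t ≡ 1 [ZMOD a] := by
      have : a ∣ u * t - 1 := ⟨-v, by linarith⟩
      exact Int.ModEq.symm ((Int.modEq_iff_dvd).mpr (by simpa using this))
    calc b * t ≡ b₀ * t [ZMOD a] := hbb.mul_right t
      _ = -t' * (u * t) := by ring
      _ ≡ -t' * 1 [ZMOD a] := hut.mul_left _
      _ = -t' := by ring
end

section
/- Let n ≥ 2, d ≥ 2, and let t₁ = t₂ = ⋯ = t_d = 1. Then for every i with 0 < i < d and every i-tuple of positive integers a₁, …, a_i with a₁ + ⋯ + a_i ≤ n and a₁ + ⋯ + a_i ≡ 0 (mod n), there exist integers b₁, …, b_i with 0 < b_j ≤ a_j + 1 for all j and b₁ + ⋯ + b_i ≡ −(d − i) (mod n). (This is the numerical criterion showing that Veronese subalgebras are nearly Gorenstein.) -/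
/-!
Positivity of the `a_j` and `n ∣ ∑ a_j` force `∑ a_j ≥ |n|`. Taking `b_j = 1 + c_j` with
`0 ≤ c_j ≤ a_j`, the sum `∑ b_j` is `i + ∑ c_j`, and `∑ c_j` can be any integer in
`[0, ∑ a_j]`, in particular the representative of `-d` in `[0, |n|)`.
-/

open Finset

theorem Finset.exists_sum_eq_of_nonneg_of_le {ι : Type*} [DecidableEq ι] (s : Finset ι)
    (f : ι → ℤ) (hf : ∀ j ∈ s, 0 ≤ f j) (r : ℤ) (hr : 0 ≤ r) (hrf : r ≤ ∑ j ∈ s, f j) :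
    ∃ c : ι → ℤ, (∀ j ∈ s, 0 ≤ c j ∧ c j ≤ f j) ∧ ∑ j ∈ s, c j = r := by
  induction s using Finset.induction_on generalizing r with
  | empty => exact ⟨0, by simp, by simp_all [le_antisymm hrf hr]⟩
  | @insert a s has ih =>
    rw [sum_insert has] at hrf
    have hfa : 0 ≤ f a := hf a (mem_insert_self a s)
    have hfs : ∀ j ∈ s, 0 ≤ f j := fun j hj => hf j (mem_insert_of_mem hj)
    -- give slot `a` as much as it can take, and distribute the rest over `s`
    obtain ⟨c, hc, hcsum⟩ := ih hfs (r - min (f a) r) (by simp)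
      (by have := sum_nonneg hfs; grind)
    refine ⟨Function.update c a (min (f a) r), ?_, ?_⟩
    · intro j hj
      rcases eq_or_ne j a with rfl | hja
      · simp [hfa, hr]
      · simpa [hja] using hc j ((mem_insert.mp hj).resolve_left hja)
    · rw [sum_insert has, Function.update_self,
        sum_congr rfl fun j hj => Function.update_of_ne (ne_of_mem_of_not_mem hj has) _ _,
        hcsum]
      ring

theorem Finset.exists_pos_le_add_one_sum_modEq {ι : Type*} [DecidableEq ι] (s : Finset ι)
    (hs : s.Nonempty) (a : ι → ℤ) (ha : ∀ j ∈ s, 0 < a j) (n : ℤ) (hn : n ∣ ∑ j ∈ s, a j)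
    (m : ℤ) :
    ∃ b : ι → ℤ, (∀ j ∈ s, 0 < b j ∧ b j ≤ a j + 1) ∧ ∑ j ∈ s, b j ≡ m [ZMOD n] := by
  have hsum : 0 < ∑ j ∈ s, a j := sum_pos ha hs
  have hn0 : n ≠ 0 := by rintro rfl; exact hsum.ne' (zero_dvd_iff.mp hn)
  set r := (m - #s) % n
  have hr : r < ∑ j ∈ s, a j :=
    (Int.emod_lt _ hn0).trans_le (Int.le_of_dvd hsum (Int.natAbs_dvd.mpr hn))
  obtain ⟨c, hc, hcsum⟩ := exists_sum_eq_of_nonneg_of_le s a (fun j hj => (ha j hj).le) r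
    (Int.emod_nonneg _ hn0) hr.le
  refine ⟨fun j => 1 + c j, fun j hj => ⟨by linarith [hc j hj], by linarith [hc j hj]⟩, ?_⟩
  calc ∑ j ∈ s, (1 + c j) = #s + r := by simp [sum_add_distrib, hcsum]
    _ ≡ #s + (m - #s) [ZMOD n] := (Int.mod_modEq _ n).add_left _
    _ = m := by ring

theorem stmt_4_general (n : ℤ) (d : ℕ) :
    ∀ i : ℕ, 0 < i → i < d → ∀ a : Fin d → ℤ,
      (∀ j : Fin d, (j : ℕ) < i → 0 < a j) →
      (∑ j ∈ Finset.univ.filter (fun j : Fin d => (j : ℕ) < i), a j) ≤ n →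
      (∑ j ∈ Finset.univ.filter (fun j : Fin d => (j : ℕ) < i), a j) ≡ 0 [ZMOD n] →
      ∃ b : Fin d → ℤ,
        (∀ j : Fin d, (j : ℕ) < i → 0 < b j ∧ b j ≤ a j + 1) ∧
        (∑ j ∈ Finset.univ.filter (fun j : Fin d => (j : ℕ) < i), b j)
          ≡ -((d : ℤ) - i) [ZMOD n] := by
  intro i hi hid a ha _ hmod
  have hs : (univ.filter fun j : Fin d => (j : ℕ) < i).Nonempty := ⟨⟨0, by omega⟩, by simpa⟩
  simpa using exists_pos_le_add_one_sum_modEq _ hs a (by simpa using ha) n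
    (Int.modEq_zero_iff_dvd.mp hmod) (-((d : ℤ) - i))

/-- The numerical nearly-Gorenstein criterion for Veronese subalgebras
`1/n(1,…,1)` (all weights equal to 1). -/
theorem stmt_4 (n : ℤ) (hn : 2 ≤ n) (d : ℕ) (hd : 2 ≤ d) :
    ∀ i : ℕ, 0 < i → i < d → ∀ a : Fin d → ℤ,
      (∀ j : Fin d, (j : ℕ) < i → 0 < a j) →
      (∑ j ∈ Finset.univ.filter (fun j : Fin d => (j : ℕ) < i), a j) ≤ n →
      (∑ j ∈ Finset.univ.filter (fun j : Fin d => (j : ℕ) < i), a j) ≡ 0 [ZMOD n] →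
      ∃ b : Fin d → ℤ,
        (∀ j : Fin d, (j : ℕ) < i → 0 < b j ∧ b j ≤ a j + 1) ∧
        (∑ j ∈ Finset.univ.filter (fun j : Fin d => (j : ℕ) < i), b j)
          ≡ -((d : ℤ) - i) [ZMOD n] :=
  stmt_4_general n d
end

section
/- Let d ≥ 3 and n ≥ 3 be integers with gcd(d − 2, n) = 1, and let t₁ = ⋯ = t_{d−1} = 1 and t_d ≡ −(d − 2) (mod n) with t_d ≥ 1. Then for every i with 0 < i < d, every permutation σ of {1,…,d}, and every i-tuple of positive integers a₁, …, a_i with a₁ + ⋯ + a_i ≤ n and a₁·t_{σ(1)} + ⋯ + a_i·t_{σ(i)} ≡ 0 (mod n), there exist integers b₁, …, b_i with 0 < b_j ≤ a_j + 1 for all j and b₁·t_{σ(1)} + ⋯ + b_i·t_{σ(i)} ≡ −(t_{σ(i+1)} + ⋯ + t_{σ(d)}) (mod n). -/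
/-!
Since all weights but `t_d` equal `1`, the weights sum to `(d - 1) + t_d ≡ 1 (mod n)`, so the
required residue `-(t_{σ(i+1)} + ⋯ + t_{σ(d)})` is `t_{σ(1)} + ⋯ + t_{σ(i)} - 1`. If one of the
first `i` weights is `1`, take `b = a + 1` except at that index, where `b = a`. Otherwise `i = 1`
and `σ(1) = d`; since `t_d ≡ -(d - 2)` is a unit modulo `n`, `a₁ t_d ≡ 0` and `0 < a₁ ≤ n`
force `a₁ = n`, and `b₁ ∈ (0, n]` can be chosen freely in its residue class.
-/

open Finset

theorem Int.ModEq.isCoprime_iff {a b n : ℤ} (h : a ≡ b [ZMOD n]) :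
    IsCoprime a n ↔ IsCoprime b n := by
  obtain ⟨k, hk⟩ := h.dvd
  rw [show b = a + k * n by linarith]
  exact IsCoprime.add_mul_right_left_iff.symm

theorem Int.exists_mem_Ioc_mul_modEq {n w : ℤ} (hn : 0 < n) (hw : IsCoprime w n) (c : ℤ) :
    ∃ b ∈ Set.Ioc 0 n, b * w ≡ c [ZMOD n] := by
  obtain ⟨u, v, huv⟩ := hw
  refine ⟨(c * u - 1) % n + 1, ⟨by linarith [Int.emod_nonneg (c * u - 1) hn.ne'],
    by linarith [Int.emod_lt_of_pos (c * u - 1) hn]⟩, ?_⟩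
  have hb : (c * u - 1) % n + 1 ≡ c * u [ZMOD n] := by
    simpa using (Int.mod_modEq (c * u - 1) n).add_right 1
  refine (hb.mul_right w).trans ((Int.modEq_iff_dvd).mpr ⟨c * v, ?_⟩)
  linear_combination -c * huv

theorem Fintype.sum_eq_add_card_sub_one {ι : Type*} [Fintype ι] [DecidableEq ι] {t : ι → ℤ}
    {e : ι} (ht : ∀ j ≠ e, t j = 1) : ∑ j, t j = t e + (Fintype.card ι - 1) := by
  rw [Fintype.sum_eq_add_sum_compl e]
  congr 1
  rw [Finset.sum_congr rfl fun j hj => ht j (notMem_singleton.mp (mem_compl.mp hj)), sum_const,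
    card_compl, card_singleton, nsmul_one, Nat.cast_sub (Fintype.card_pos_iff.mpr ⟨e⟩),
    Nat.cast_one]

section

variable {ι : Type*} [DecidableEq ι] {n : ℤ}

theorem exists_le_add_one_modEq_of_eq_one {S : Finset ι} {a w : ι → ℤ} {j₀ : ι}
    (hj₀ : j₀ ∈ S) (hw : w j₀ = 1) (ha : ∀ j ∈ S, 0 < a j)
    (hcong : ∑ j ∈ S, a j * w j ≡ 0 [ZMOD n]) :
    ∃ b : ι → ℤ, (∀ j ∈ S, 0 < b j ∧ b j ≤ a j + 1) ∧
      ∑ j ∈ S, b j * w j ≡ ∑ j ∈ S, w j - 1 [ZMOD n] := by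
  refine ⟨fun j => if j = j₀ then a j else a j + 1, fun j hj => ?_, ?_⟩
  · have := ha j hj
    dsimp only
    split_ifs <;> omega
  · have hsum : ∑ j ∈ S, (if j = j₀ then a j else a j + 1) * w j
        = ∑ j ∈ S, a j * w j + ∑ j ∈ S, w j - w j₀ := by
      have hterm : ∀ j ∈ S, (if j = j₀ then a j else a j + 1) * w j
          = a j * w j + w j - if j = j₀ then w j else 0 := by
        intro j _
        split_ifs <;> ring
      rw [sum_congr rfl hterm, sum_sub_distrib, sum_add_distrib, sum_ite_eq' S j₀, if_pos hj₀]
    rw [hsum, hw, add_sub_assoc]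
    simpa only [zero_add] using hcong.add_right (∑ j ∈ S, w j - 1)

theorem exists_le_add_one_modEq_of_isCoprime {a w : ℤ} (hw : IsCoprime w n) (ha : 0 < a)
    (han : a ≤ n) (hcong : a * w ≡ 0 [ZMOD n]) :
    ∃ b, (0 < b ∧ b ≤ a + 1) ∧ b * w ≡ w - 1 [ZMOD n] := by
  have hna : n ∣ a := hw.symm.dvd_of_dvd_mul_right (Int.modEq_zero_iff_dvd.mp hcong)
  have ha_eq : a = n := le_antisymm han (Int.le_of_dvd ha hna)
  obtain ⟨b, ⟨hb0, hbn⟩, hb⟩ := Int.exists_mem_Ioc_mul_modEq (ha.trans_le han) hw (w - 1)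
  exact ⟨b, ⟨hb0, by omega⟩, hb⟩

theorem exists_le_add_one_modEq_neg_sum_compl [Fintype ι] {S : Finset ι} {a w : ι → ℤ} {e : ι}
    (hS : S.Nonempty) (hw1 : ∀ j ≠ e, w j = 1) (he : IsCoprime (w e) n)
    (hw : ∑ j, w j ≡ 1 [ZMOD n]) (ha : ∀ j ∈ S, 0 < a j) (hsum : ∑ j ∈ S, a j ≤ n)
    (hcong : ∑ j ∈ S, a j * w j ≡ 0 [ZMOD n]) :
    ∃ b : ι → ℤ, (∀ j ∈ S, 0 < b j ∧ b j ≤ a j + 1) ∧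
      ∑ j ∈ S, b j * w j ≡ -∑ j ∈ Sᶜ, w j [ZMOD n] := by
  have htarget : ∑ j ∈ S, w j - 1 ≡ -∑ j ∈ Sᶜ, w j [ZMOD n] := by
    rw [← sum_add_sum_compl S w, Int.modEq_iff_dvd] at hw
    rw [Int.modEq_iff_dvd]
    convert hw using 1
    ring
  suffices ∃ b : ι → ℤ, (∀ j ∈ S, 0 < b j ∧ b j ≤ a j + 1) ∧
      ∑ j ∈ S, b j * w j ≡ ∑ j ∈ S, w j - 1 [ZMOD n] from
    this.imp fun b hb => ⟨hb.1, hb.2.trans htarget⟩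
  by_cases h : ∃ j ∈ S, j ≠ e
  · obtain ⟨j₀, hj₀, hne⟩ := h
    exact exists_le_add_one_modEq_of_eq_one hj₀ (hw1 j₀ hne) ha hcong
  · push Not at h
    obtain rfl : S = {e} := hS.subset_singleton_iff.mp fun j hj => mem_singleton.mpr (h j hj)
    simp only [sum_singleton, mem_singleton, forall_eq] at ha hsum hcong ⊢
    obtain ⟨b, hb, hbw⟩ := exists_le_add_one_modEq_of_isCoprime he ha hsum hcong
    exact ⟨fun _ => b, hb, hbw⟩

end

theorem stmt_5_general (d : ℕ) (n : ℤ)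
    (hgcd : Int.gcd ((d : ℤ) - 2) n = 1) (t : Fin d → ℤ)
    (ht1 : ∀ j : Fin d, (j : ℕ) < d - 1 → t j = 1)
    (htd : ∀ j : Fin d, (j : ℕ) = d - 1 → 1 ≤ t j ∧ t j ≡ -((d : ℤ) - 2) [ZMOD n]) :
    ∀ i : ℕ, 0 < i → i < d → ∀ σ : Equiv.Perm (Fin d), ∀ a : Fin d → ℤ,
      (∀ j : Fin d, (j : ℕ) < i → 0 < a j) →
      (∑ j ∈ Finset.univ.filter (fun j : Fin d => (j : ℕ) < i), a j) ≤ n →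
      (∑ j ∈ Finset.univ.filter (fun j : Fin d => (j : ℕ) < i), a j * t (σ j))
          ≡ 0 [ZMOD n] →
      ∃ b : Fin d → ℤ,
        (∀ j : Fin d, (j : ℕ) < i → 0 < b j ∧ b j ≤ a j + 1) ∧
        (∑ j ∈ Finset.univ.filter (fun j : Fin d => (j : ℕ) < i), b j * t (σ j))
          ≡ -(∑ k ∈ Finset.univ.filter (fun k : Fin d => i ≤ (k : ℕ)), t (σ k))
            [ZMOD n] := by
  intro i hi0 hid σ a ha hsum hcong
  set e : Fin d := ⟨d - 1, by omega⟩
  obtain ⟨-, hte⟩ := htd e rfl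
  have ht : ∀ j ≠ e, t j = 1 := fun j hj =>
    ht1 j (by have : (j : ℕ) ≠ d - 1 := Fin.val_ne_of_ne hj; omega)
  have htot : ∑ j, t (σ j) ≡ 1 [ZMOD n] := by
    rw [Equiv.sum_comp, Fintype.sum_eq_add_card_sub_one ht, Fintype.card_fin]
    convert hte.add_right ((d : ℤ) - 1) using 2
    ring
  have hcop : IsCoprime (t e) n :=
    hte.isCoprime_iff.mpr (Int.isCoprime_iff_gcd_eq_one.mpr hgcd).neg_left
  set S := univ.filter fun j : Fin d => (j : ℕ) < i
  have hmem : ∀ j, j ∈ S ↔ (j : ℕ) < i := by simp [S]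
  have hSc : Sᶜ = univ.filter fun k : Fin d => i ≤ (k : ℕ) := by ext; simp [S]
  obtain ⟨b, hb, hbt⟩ := exists_le_add_one_modEq_neg_sum_compl (w := t ∘ σ) (e := σ.symm e)
    ⟨⟨0, by omega⟩, (hmem _).mpr hi0⟩ (fun j hj => ht _ (by simpa [Equiv.eq_symm_apply] using hj))
    (by simpa using hcop) htot (fun j hj => ha j ((hmem j).mp hj)) hsum hcong
  exact ⟨b, fun j hj => hb j ((hmem j).mpr hj), hSc ▸ hbt⟩

/-- The numerical nearly-Gorenstein criterion for `1/n(1,…,1,t_d)` with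
`t_d ≡ -(d-2) (mod n)` and `gcd(d-2, n) = 1` (Proposition 2.4 of the paper). -/
theorem stmt_5 (d : ℕ) (hd : 3 ≤ d) (n : ℤ) (hn : 3 ≤ n)
    (hgcd : Int.gcd ((d : ℤ) - 2) n = 1) (t : Fin d → ℤ)
    (ht1 : ∀ j : Fin d, (j : ℕ) < d - 1 → t j = 1)
    (htd : ∀ j : Fin d, (j : ℕ) = d - 1 → 1 ≤ t j ∧ t j ≡ -((d : ℤ) - 2) [ZMOD n]) :
    ∀ i : ℕ, 0 < i → i < d → ∀ σ : Equiv.Perm (Fin d), ∀ a : Fin d → ℤ,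
      (∀ j : Fin d, (j : ℕ) < i → 0 < a j) →
      (∑ j ∈ Finset.univ.filter (fun j : Fin d => (j : ℕ) < i), a j) ≤ n →
      (∑ j ∈ Finset.univ.filter (fun j : Fin d => (j : ℕ) < i), a j * t (σ j))
          ≡ 0 [ZMOD n] →
      ∃ b : Fin d → ℤ,
        (∀ j : Fin d, (j : ℕ) < i → 0 < b j ∧ b j ≤ a j + 1) ∧
        (∑ j ∈ Finset.univ.filter (fun j : Fin d => (j : ℕ) < i), b j * t (σ j))
          ≡ -(∑ k ∈ Finset.univ.filter (fun k : Fin d => i ≤ (k : ℕ)), t (σ k))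
            [ZMOD n] :=
  stmt_5_general d n hgcd t ht1 htd
end

section
/- Let n ≥ 4 and set t₁ = 1, t₂ = n − 1, t₃ = n − 2. Then the numerical nearly-Gorenstein criterion fails: with i = 2, σ the identity, a₁ = a₂ = 1 we have a₁·t₁ + a₂·t₂ ≡ 0 (mod n), yet there exist no integers b₁, b₂ with 0 < b₁, b₂ ≤ 2 and b₁·t₁ + b₂·t₂ ≡ −t₃ (mod n), i.e. no such b₁, b₂ with b₁ − b₂ ≡ 2 (mod n). Hence 1/n(1, n−1, n−2) is not nearly Gorenstein; in particular this applies to 1/4(1,2,3). -/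
/-- For `n ≥ 4` and weights `(1, n-1, n-2)`, the numerical nearly-Gorenstein
criterion fails: `1·1 + 1·(n-1) ≡ 0 (mod n)`, but there are no
`0 < b₁, b₂ ≤ 2` with `b₁·1 + b₂·(n-1) ≡ -(n-2) (mod n)`.
Hence `1/n(1, n-1, n-2)` is not nearly Gorenstein. -/
theorem stmt_7 (n : ℤ) (hn : 4 ≤ n) :
    (1 * 1 + 1 * (n - 1)) ≡ 0 [ZMOD n] ∧
    ¬ ∃ b₁ b₂ : ℤ, 0 < b₁ ∧ b₁ ≤ 2 ∧ 0 < b₂ ∧ b₂ ≤ 2 ∧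
        b₁ * 1 + b₂ * (n - 1) ≡ -(n - 2) [ZMOD n] := by
  constructor
  · show (1 * 1 + 1 * (n - 1)) % n = 0 % n
    simp
  · rintro ⟨b₁, b₂, h1, h2, h3, h4, h⟩
    have hd : n ∣ (b₁ * 1 + b₂ * (n - 1) - -(n - 2)) := Int.ModEq.dvd h.symm
    obtain ⟨k, hk⟩ := hd
    have : b₁ - b₂ - 2 = n * (k - b₂ - 1) := by ring_nf; ring_nf at hk; linarith
    have hz : b₁ - b₂ - 2 = 0 := Int.eq_zero_of_abs_lt_dvd ⟨k - b₂ - 1, this⟩ (by rw [abs_lt]; omega)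
    omega
end

section
/- Let n ≥ 2, d ≥ 2, and t₁, …, t_d be integers such that the numerical nearly-Gorenstein criterion holds (for every 0 < i < d, every permutation σ, and every positive integers a₁,…,a_i with Σ a_j ≤ n and Σ a_j t_{σ(j)} ≡ 0 (mod n), there exist 0 < b_j ≤ a_j + 1 with Σ b_j t_{σ(j)} ≡ −Σ_{k=i+1}^{d} t_{σ(k)} (mod n)). Suppose that for some i > 0 and some permutation σ one has gcd(t_{σ(1)}, …, t_{σ(i)}, n) = m > 1. Then t_{σ(i+1)} + ⋯ + t_{σ(d)} ≡ 0 (mod m). -/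
/-!
Apply the criterion with `i = 1` and `a₁ = n`: this gives `b` with
`b · t_{σ(1)} ≡ -(t_{σ(2)} + ⋯ + t_{σ(d)}) (mod n)`. Reducing modulo `m ∣ n` kills the left
side, since `m ∣ t_{σ(1)}`, and also the terms `t_{σ(2)}, …, t_{σ(i)}`, which `m` divides too.
-/

open Finset

/-- Indices are `0`-based: `j < i` ranges over the first `i` positions of `σ`. -/
def NearlyGorensteinCriterion (n : ℤ) {d : ℕ} (t : Fin d → ℤ) : Prop :=
  ∀ i : ℕ, 0 < i → i < d → ∀ σ : Equiv.Perm (Fin d), ∀ a : Fin d → ℤ,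
    (∀ j : Fin d, (j : ℕ) < i → 0 < a j) →
    (∑ j ∈ univ.filter (fun j : Fin d => (j : ℕ) < i), a j) ≤ n →
    (∑ j ∈ univ.filter (fun j : Fin d => (j : ℕ) < i), a j * t (σ j)) ≡ 0 [ZMOD n] →
    ∃ b : Fin d → ℤ,
      (∀ j : Fin d, (j : ℕ) < i → 0 < b j ∧ b j ≤ a j + 1) ∧
      (∑ j ∈ univ.filter (fun j : Fin d => (j : ℕ) < i), b j * t (σ j))
        ≡ -(∑ k ∈ univ.filter (fun k : Fin d => i ≤ (k : ℕ)), t (σ k)) [ZMOD n]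

theorem Fin.filter_val_lt_one_eq_singleton {d : ℕ} (hd : 0 < d) :
    univ.filter (fun j : Fin d => (j : ℕ) < 1) = {⟨0, hd⟩} := by
  ext j
  simp only [mem_filter, mem_univ, true_and, mem_singleton, Fin.ext_iff]
  omega

theorem Fin.sum_filter_le_modEq_of_dvd {d l i : ℕ} (hli : l ≤ i) {m : ℤ} (f : Fin d → ℤ)
    (hf : ∀ j : Fin d, l ≤ (j : ℕ) → (j : ℕ) < i → m ∣ f j) :
    ∑ k ∈ univ.filter (fun k : Fin d => l ≤ (k : ℕ)), f k
      ≡ ∑ k ∈ univ.filter (fun k : Fin d => i ≤ (k : ℕ)), f k [ZMOD m] := by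
  have hupper : (univ.filter (fun k : Fin d => l ≤ (k : ℕ))).filter
      (fun k : Fin d => ¬ (k : ℕ) < i) = univ.filter (fun k : Fin d => i ≤ (k : ℕ)) := by
    ext k
    simp only [mem_filter, mem_univ, true_and]
    omega
  have hmiddle : m ∣ ∑ k ∈ (univ.filter (fun k : Fin d => l ≤ (k : ℕ))).filter
      (fun k : Fin d => (k : ℕ) < i), f k :=
    Finset.dvd_sum fun k hk => by
      simp only [mem_filter, mem_univ, true_and] at hk
      exact hf k hk.1 hk.2
  rw [← sum_filter_add_sum_filter_not _ (fun k : Fin d => (k : ℕ) < i), hupper]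
  simpa using (Int.modEq_zero_iff_dvd.mpr hmiddle).add_right
    (∑ k ∈ univ.filter (fun k : Fin d => i ≤ (k : ℕ)), f k)

theorem NearlyGorensteinCriterion.exists_mul_modEq_neg_sum {n : ℤ} {d : ℕ} {t : Fin d → ℤ}
    (hcrit : NearlyGorensteinCriterion n t) (hn : 0 < n) (hd : 1 < d)
    (σ : Equiv.Perm (Fin d)) :
    ∃ c : ℤ, c * t (σ ⟨0, by omega⟩)
      ≡ -∑ k ∈ univ.filter (fun k : Fin d => 1 ≤ (k : ℕ)), t (σ k) [ZMOD n] := by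
  have hfirst := Fin.filter_val_lt_one_eq_singleton (d := d) (by omega)
  obtain ⟨b, -, hb⟩ := hcrit 1 one_pos hd σ (fun _ => n) (fun _ _ => hn)
    (by rw [hfirst, sum_singleton])
    (by rw [hfirst, sum_singleton]; exact Int.modEq_zero_iff_dvd.mpr (dvd_mul_right n _))
  rw [hfirst, sum_singleton] at hb
  exact ⟨_, hb⟩

theorem stmt_8_general (n : ℤ) (hn : 2 ≤ n) (d : ℕ) (t : Fin d → ℤ)
    (hcrit : ∀ i : ℕ, 0 < i → i < d → ∀ σ : Equiv.Perm (Fin d), ∀ a : Fin d → ℤ,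
      (∀ j : Fin d, (j : ℕ) < i → 0 < a j) →
      (∑ j ∈ Finset.univ.filter (fun j : Fin d => (j : ℕ) < i), a j) ≤ n →
      (∑ j ∈ Finset.univ.filter (fun j : Fin d => (j : ℕ) < i), a j * t (σ j))
          ≡ 0 [ZMOD n] →
      ∃ b : Fin d → ℤ,
        (∀ j : Fin d, (j : ℕ) < i → 0 < b j ∧ b j ≤ a j + 1) ∧
        (∑ j ∈ Finset.univ.filter (fun j : Fin d => (j : ℕ) < i), b j * t (σ j))
          ≡ -(∑ k ∈ Finset.univ.filter (fun k : Fin d => i ≤ (k : ℕ)), t (σ k))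
            [ZMOD n])
    (i : ℕ) (hi0 : 0 < i) (hid : i < d) (σ : Equiv.Perm (Fin d)) (m : ℕ)
    (hgcd : Int.gcd
      ((Finset.univ.filter (fun j : Fin d => (j : ℕ) < i)).gcd (fun j => t (σ j)))
      n = m) :
    (∑ k ∈ Finset.univ.filter (fun k : Fin d => i ≤ (k : ℕ)), t (σ k))
      ≡ 0 [ZMOD (m : ℤ)] := by
  have hmn : (m : ℤ) ∣ n := hgcd ▸ Int.gcd_dvd_right _ _
  have hmt : ∀ j : Fin d, (j : ℕ) < i → (m : ℤ) ∣ t (σ j) := fun j hj =>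
    (hgcd ▸ Int.gcd_dvd_left _ _ : (m : ℤ) ∣ _).trans
      (gcd_dvd (f := fun j => t (σ j)) (by simp [hj]))
  obtain ⟨c, hc⟩ :=
    NearlyGorensteinCriterion.exists_mul_modEq_neg_sum hcrit (by omega) (by omega) σ
  have hfirst : c * t (σ ⟨0, by omega⟩) ≡ 0 [ZMOD m] :=
    Int.modEq_zero_iff_dvd.mpr ((hmt _ hi0).mul_left c)
  have htail : -∑ k ∈ univ.filter (fun k : Fin d => 1 ≤ (k : ℕ)), t (σ k) ≡ 0 [ZMOD m] :=
    (hc.of_dvd hmn).symm.trans hfirst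
  calc _ ≡ ∑ k ∈ univ.filter (fun k : Fin d => 1 ≤ (k : ℕ)), t (σ k) [ZMOD m] :=
        (Fin.sum_filter_le_modEq_of_dvd hi0 _ fun j _ hj => hmt j hj).symm
    _ ≡ 0 [ZMOD m] := by simpa using htail.neg

/-- Remark 2.8 of the paper: if the numerical nearly-Gorenstein criterion holds
for `1/n(t₁,…,t_d)` and `gcd(t_{σ(1)}, …, t_{σ(i)}, n) = m > 1`, then
`t_{σ(i+1)} + ⋯ + t_{σ(d)} ≡ 0 (mod m)`. -/
theorem stmt_8 (n : ℤ) (hn : 2 ≤ n) (d : ℕ) (hd : 2 ≤ d) (t : Fin d → ℤ)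
    (hcrit : ∀ i : ℕ, 0 < i → i < d → ∀ σ : Equiv.Perm (Fin d), ∀ a : Fin d → ℤ,
      (∀ j : Fin d, (j : ℕ) < i → 0 < a j) →
      (∑ j ∈ Finset.univ.filter (fun j : Fin d => (j : ℕ) < i), a j) ≤ n →
      (∑ j ∈ Finset.univ.filter (fun j : Fin d => (j : ℕ) < i), a j * t (σ j))
          ≡ 0 [ZMOD n] →
      ∃ b : Fin d → ℤ,
        (∀ j : Fin d, (j : ℕ) < i → 0 < b j ∧ b j ≤ a j + 1) ∧
        (∑ j ∈ Finset.univ.filter (fun j : Fin d => (j : ℕ) < i), b j * t (σ j))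
          ≡ -(∑ k ∈ Finset.univ.filter (fun k : Fin d => i ≤ (k : ℕ)), t (σ k))
            [ZMOD n])
    (i : ℕ) (hi0 : 0 < i) (hid : i < d) (σ : Equiv.Perm (Fin d)) (m : ℕ)
    (hm : 1 < m)
    (hgcd : Int.gcd
      ((Finset.univ.filter (fun j : Fin d => (j : ℕ) < i)).gcd (fun j => t (σ j)))
      n = m) :
    (∑ k ∈ Finset.univ.filter (fun k : Fin d => i ≤ (k : ℕ)), t (σ k))
      ≡ 0 [ZMOD (m : ℤ)] :=
  stmt_8_general n hn d t hcrit i hi0 hid σ m hgcd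
end

section
/- Let n ≥ 3 and m be coprime positive integers with m < ⌈n/2⌉. Then the number of integers a with 1 ≤ a ≤ n − 1 such that there exist no integers b₁, b₃ with 0 < b₁, b₃ ≤ a + 1 and b₁ − b₃ ≡ −m (mod n) is exactly m − 1. -/
open scoped Classical

/-!
A difference `b₁ - b₃` of two integers in `[1, a + 1]` ranges over `[-a, a]`. If `m ≤ a` it hits
`-m` exactly (take `b₁ = 1`, `b₃ = m + 1`). If `a < m` then `b₁ - b₃ + m` lies in `[m - a, m + a]`,
strictly between `0` and `n` as soon as `2m ≤ n`, so it is not a multiple of `n`. The excluded `a`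
are therefore exactly `1, …, m - 1`.
-/

theorem exists_sub_modEq_neg_iff_le {n m a : ℕ} (hmn : 2 * m ≤ n) :
    (∃ b₁ b₃ : ℤ, 0 < b₁ ∧ b₁ ≤ (a : ℤ) + 1 ∧ 0 < b₃ ∧ b₃ ≤ (a : ℤ) + 1 ∧
      b₁ - b₃ ≡ -(m : ℤ) [ZMOD (n : ℤ)]) ↔ m ≤ a := by
  constructor
  · rintro ⟨b₁, b₃, hb₁, hb₁a, hb₃, hb₃a, hmod⟩
    by_contra! ham
    have hdvd : (n : ℤ) ∣ b₁ - b₃ + m := by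
      simpa [sub_neg_eq_add] using hmod.symm.dvd
    have hpos : 0 < b₁ - b₃ + m := by omega
    have := Int.le_of_dvd hpos hdvd
    omega
  · intro ham
    exact ⟨1, m + 1, by omega, by omega, by omega, by omega, by simp [Int.ModEq]⟩

theorem stmt_18_general (n m : ℕ) (hlt : m < (n + 1) / 2) :
    ((Finset.Icc 1 (n - 1)).filter fun a : ℕ =>
        ¬ ∃ b₁ b₃ : ℤ, 0 < b₁ ∧ b₁ ≤ (a : ℤ) + 1 ∧ 0 < b₃ ∧ b₃ ≤ (a : ℤ) + 1 ∧
            b₁ - b₃ ≡ -(m : ℤ) [ZMOD (n : ℤ)]).card = m - 1 := by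
  have hmn : 2 * m ≤ n := by omega
  simp_rw [exists_sub_modEq_neg_iff_le hmn, not_le]
  have hfilter : (Finset.Icc 1 (n - 1)).filter (· < m) = Finset.Ico 1 m := by
    ext a
    simp only [Finset.mem_filter, Finset.mem_Icc, Finset.mem_Ico]
    omega
  rw [hfilter, Nat.card_Ico]

/-- Combinatorial core of Theorem 2.11 of the paper: for coprime `n ≥ 3` and
`0 < m < ⌈n/2⌉`, exactly `m - 1` of the integers `a` with `1 ≤ a ≤ n - 1`
admit no `0 < b₁, b₃ ≤ a + 1` with `b₁ - b₃ ≡ -m (mod n)`. -/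
theorem stmt_18 (n m : ℕ) (hn : 3 ≤ n) (hm : 0 < m) (hcop : Nat.Coprime n m)
    (hlt : m < (n + 1) / 2) :
    ((Finset.Icc 1 (n - 1)).filter fun a : ℕ =>
        ¬ ∃ b₁ b₃ : ℤ, 0 < b₁ ∧ b₁ ≤ (a : ℤ) + 1 ∧ 0 < b₃ ∧ b₃ ≤ (a : ℤ) + 1 ∧
            b₁ - b₃ ≡ -(m : ℤ) [ZMOD (n : ℤ)]).card = m - 1 :=
  stmt_18_general n m hlt
end
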